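/- Let (Ω, F, P) be a probability space, X : Ω → 𝒳 a random variable into a measurable space 𝒳, S : Ω → [0,1] a random variable, and C : Ω → [0,1] a random variable, and set Y = 1{C ≥ 1/2}. Assume S and C are conditionally independent given σ(X), i.e., for all bounded measurable f, g, E[f(S) g(C) | σ(X)] = E[f(S) | σ(X)] · E[g(C) | σ(X)] almost surely. Let I ⊆ [0,1] be a measurable set with P(S ∈ I) > 0. Let φ, χ : 𝒳 → [0,1] be measurable functions with φ(X) a version of E[1{S ∈ I} | σ(X)] and χ(X) a version of E[1{C ≥ 1/2} | σ(X)]. Let (X_n)_{n≥1} be independent random variables each with the law of X. Then the modified estimator r̂ = (Σ_{n=1}^N φ(X_n) χ(X_n)) / (Σ_{n=1}^N φ(X_n)) converges in probability, as N → ∞, to E[Y | S ∈ I] = E[1{C ≥ 1/2} · 1{S ∈ I}] / P(S ∈ I). -/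

import Mathlib

/-!
Both `φ(X)` and `φ(X) χ(X)` are functions of `X` whose means are known: by the tower property
`E[φ(X)] = P(S ∈ I)`, and by conditional independence `φ(X) χ(X)` is a version of
`E[1{S ∈ I} 1{C ≥ 1/2} | σ(X)]`, so `E[φ(X) χ(X)] = E[1{C ≥ 1/2} 1{S ∈ I}]`. The strong law of
large numbers applied to the i.i.d. sequences `φ(X_n) χ(X_n)` and `φ(X_n)` makes numerator and
denominator of `r̂`, both divided by `N`, converge almost surely to these means. The denominator's
limit is positive, so `r̂` converges almost surely, hence in probability, to their ratio.
-/

open MeasureTheory ProbabilityTheory Filter Topology Finset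

lemma tendsto_div_of_tendsto_averages {a b : ℕ → ℝ} {x y : ℝ}
    (ha : Tendsto (fun N : ℕ => a N / N) atTop (𝓝 x))
    (hb : Tendsto (fun N : ℕ => b N / N) atTop (𝓝 y)) (hy : y ≠ 0) :
    Tendsto (fun N => a N / b N) atTop (𝓝 (x / y)) := by
  refine (ha.div hb hy).congr' ?_
  filter_upwards [eventually_ne_atTop 0] with N hN
  exact div_div_div_cancel_right₀ (Nat.cast_ne_zero.mpr hN) _ _

section IID

variable {Ω 𝒳 : Type*} [MeasurableSpace Ω] [MeasurableSpace 𝒳] {P : Measure Ω}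
  {X : Ω → 𝒳} {Xs : ℕ → Ω → 𝒳}

theorem tendsto_ae_average_comp_of_iIndepFun (hindep : iIndepFun Xs P)
    (hident : ∀ n, IdentDistrib (Xs n) X P P) {g : 𝒳 → ℝ} (hg : Measurable g)
    (hint : Integrable (fun ω => g (X ω)) P) :
    ∀ᵐ ω ∂P, Tendsto (fun N : ℕ => (∑ n ∈ range N, g (Xs n ω)) / N) atTop
      (𝓝 (∫ ω, g (X ω) ∂P)) := by
  have hident₀ : IdentDistrib (fun ω => g (Xs 0 ω)) (fun ω => g (X ω)) P P := (hident 0).comp hg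
  have slln := strong_law_ae_real (fun n ω => g (Xs n ω)) (hident₀.integrable_iff.mpr hint)
    (fun i j hij => (hindep.indepFun hij).comp hg hg)
    (fun i => ((hident i).trans (hident 0).symm).comp hg)
  rwa [hident₀.integral_eq] at slln

theorem tendstoInMeasure_div_sum_comp_of_iIndepFun [IsFiniteMeasure P]
    (hXs : ∀ n, Measurable (Xs n)) (hindep : iIndepFun Xs P)
    (hident : ∀ n, IdentDistrib (Xs n) X P P) {g h : 𝒳 → ℝ} (hg : Measurable g)
    (hh : Measurable h) (hgX : Integrable (fun ω => g (X ω)) P)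
    (hhX : Integrable (fun ω => h (X ω)) P) (hne : ∫ ω, h (X ω) ∂P ≠ 0) :
    TendstoInMeasure P
      (fun N ω => (∑ n ∈ range N, g (Xs n ω)) / ∑ n ∈ range N, h (Xs n ω)) atTop
      (fun _ => (∫ ω, g (X ω) ∂P) / ∫ ω, h (X ω) ∂P) := by
  refine tendstoInMeasure_of_tendsto_ae (fun N => ?_) ?_
  · exact ((Finset.measurable_sum _ fun n _ => hg.comp (hXs n)).div
      (Finset.measurable_sum _ fun n _ => hh.comp (hXs n))).aestronglyMeasurable
  · filter_upwards [tendsto_ae_average_comp_of_iIndepFun hindep hident hg hgX,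
      tendsto_ae_average_comp_of_iIndepFun hindep hident hh hhX] with ω hgω hhω
    exact tendsto_div_of_tendsto_averages hgω hhω hne

end IID

lemma abs_indicator_one_le_one {α : Type*} (s : Set α) (x : α) :
    |s.indicator (fun _ => (1 : ℝ)) x| ≤ 1 := by
  by_cases hx : x ∈ s <;> simp [hx]

theorem consistency_r_hat_uncertain_labels_general
    {Ω : Type*} [MeasurableSpace Ω] (P : Measure Ω) [IsProbabilityMeasure P]
    {𝒳 : Type*} [MeasurableSpace 𝒳]
    (X : Ω → 𝒳) (hX : Measurable X)
    (S : Ω → ℝ) (hS : Measurable S)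
    (C : Ω → ℝ)
    (hCI : ∀ f g : ℝ → ℝ, Measurable f → Measurable g →
      (∃ D, ∀ x, |f x| ≤ D) → (∃ D, ∀ x, |g x| ≤ D) →
      P[fun ω => f (S ω) * g (C ω) | MeasurableSpace.comap X inferInstance] =ᵐ[P]
        fun ω => (P[fun ω' => f (S ω') | MeasurableSpace.comap X inferInstance]) ω *
          (P[fun ω' => g (C ω') | MeasurableSpace.comap X inferInstance]) ω)
    (I : Set ℝ) (hI : MeasurableSet I) (hIpos : 0 < P (S ⁻¹' I))
    (φ : 𝒳 → ℝ) (hφ : Measurable φ)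
    (χ : 𝒳 → ℝ) (hχ : Measurable χ)
    (hverφ : (fun ω => φ (X ω)) =ᵐ[P]
      P[(S ⁻¹' I).indicator (fun _ => (1 : ℝ)) | MeasurableSpace.comap X inferInstance])
    (hverχ : (fun ω => χ (X ω)) =ᵐ[P]
      P[{ω | (1 : ℝ) / 2 ≤ C ω}.indicator (fun _ => (1 : ℝ)) |
        MeasurableSpace.comap X inferInstance])
    (Xs : ℕ → Ω → 𝒳) (hXs : ∀ n, Measurable (Xs n))
    (hindep : iIndepFun Xs P)
    (hident : ∀ n, Measure.map (Xs n) P = Measure.map X P) :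
    TendstoInMeasure P
      (fun N ω => (∑ n ∈ Finset.range N, φ (Xs n ω) * χ (Xs n ω)) /
        (∑ n ∈ Finset.range N, φ (Xs n ω)))
      atTop
      (fun _ => (∫ ω, {ω' | (1 : ℝ) / 2 ≤ C ω'}.indicator (fun _ => (1 : ℝ)) ω *
          (S ⁻¹' I).indicator (fun _ => (1 : ℝ)) ω ∂P) /
        (P (S ⁻¹' I)).toReal) := by
  have hm : MeasurableSpace.comap X inferInstance ≤ _ := hX.comap_le
  have hprod : (fun ω => φ (X ω) * χ (X ω)) =ᵐ[P]
      P[fun ω => (S ⁻¹' I).indicator (fun _ => (1 : ℝ)) ω *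
        {ω' | (1 : ℝ) / 2 ≤ C ω'}.indicator (fun _ => (1 : ℝ)) ω |
        MeasurableSpace.comap X inferInstance] := by
    have key := hCI (I.indicator fun _ => 1) ((Set.Ici ((1 : ℝ) / 2)).indicator fun _ => 1)
      (measurable_const.indicator hI) (measurable_const.indicator measurableSet_Ici)
      ⟨1, abs_indicator_one_le_one _⟩ ⟨1, abs_indicator_one_le_one _⟩
    simp only [← Set.indicator_comp_right] at key
    exact (hverφ.mul hverχ).trans key.symm
  have hEφ : ∫ ω, φ (X ω) ∂P = (P (S ⁻¹' I)).toReal := by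
    rw [integral_congr_ae hverφ, integral_condExp hm]
    exact integral_indicator_one (hS hI)
  have hEφχ : ∫ ω, φ (X ω) * χ (X ω) ∂P = ∫ ω, {ω' | (1 : ℝ) / 2 ≤ C ω'}.indicator
      (fun _ => (1 : ℝ)) ω * (S ⁻¹' I).indicator (fun _ => (1 : ℝ)) ω ∂P := by
    rw [integral_congr_ae hprod, integral_condExp hm]
    simp_rw [mul_comm]
  have hpos : ∫ ω, φ (X ω) ∂P ≠ 0 := by
    rw [hEφ]; exact (ENNReal.toReal_pos hIpos.ne' (measure_ne_top P _)).ne'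
  rw [← hEφ, ← hEφχ]
  exact tendstoInMeasure_div_sum_comp_of_iIndepFun (g := fun x => φ x * χ x) hXs hindep
    (fun n => ⟨(hXs n).aemeasurable, hX.aemeasurable, hident n⟩) (hφ.mul hχ) hφ
    (integrable_condExp.congr hprod.symm) (integrable_condExp.congr hverφ.symm) hpos

/-- Consistency of the calibration-function estimator under uncertain labels:
with `Y = 1{C ≥ 1/2}`, `S` and `C` conditionally independent given `σ(X)`,
`φ(X)` a version of `E[1{S ∈ I} | σ(X)]` and `χ(X)` a version of
`E[1{C ≥ 1/2} | σ(X)]`, and `(X_n)` i.i.d. with the law of `X`, the estimator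
`(∑ φ(X_n) χ(X_n)) / (∑ φ(X_n))` converges in probability to
`E[Y | S ∈ I] = E[1{C ≥ 1/2} · 1{S ∈ I}] / P(S ∈ I)`. -/
theorem consistency_r_hat_uncertain_labels
    {Ω : Type*} [MeasurableSpace Ω] (P : Measure Ω) [IsProbabilityMeasure P]
    {𝒳 : Type*} [MeasurableSpace 𝒳]
    (X : Ω → 𝒳) (hX : Measurable X)
    (S : Ω → ℝ) (hS : Measurable S) (hS01 : ∀ ω, S ω ∈ Set.Icc (0 : ℝ) 1)
    (C : Ω → ℝ) (hC : Measurable C) (hC01 : ∀ ω, C ω ∈ Set.Icc (0 : ℝ) 1)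
    (hCI : ∀ f g : ℝ → ℝ, Measurable f → Measurable g →
      (∃ D, ∀ x, |f x| ≤ D) → (∃ D, ∀ x, |g x| ≤ D) →
      P[fun ω => f (S ω) * g (C ω) | MeasurableSpace.comap X inferInstance] =ᵐ[P]
        fun ω => (P[fun ω' => f (S ω') | MeasurableSpace.comap X inferInstance]) ω *
          (P[fun ω' => g (C ω') | MeasurableSpace.comap X inferInstance]) ω)
    (I : Set ℝ) (hI : MeasurableSet I) (hIpos : 0 < P (S ⁻¹' I))
    (φ : 𝒳 → ℝ) (hφ : Measurable φ) (hφ01 : ∀ x, φ x ∈ Set.Icc (0 : ℝ) 1)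
    (χ : 𝒳 → ℝ) (hχ : Measurable χ) (hχ01 : ∀ x, χ x ∈ Set.Icc (0 : ℝ) 1)
    (hverφ : (fun ω => φ (X ω)) =ᵐ[P]
      P[(S ⁻¹' I).indicator (fun _ => (1 : ℝ)) | MeasurableSpace.comap X inferInstance])
    (hverχ : (fun ω => χ (X ω)) =ᵐ[P]
      P[{ω | (1 : ℝ) / 2 ≤ C ω}.indicator (fun _ => (1 : ℝ)) |
        MeasurableSpace.comap X inferInstance])
    (Xs : ℕ → Ω → 𝒳) (hXs : ∀ n, Measurable (Xs n))
    (hindep : iIndepFun Xs P)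
    (hident : ∀ n, Measure.map (Xs n) P = Measure.map X P) :
    TendstoInMeasure P
      (fun N ω => (∑ n ∈ Finset.range N, φ (Xs n ω) * χ (Xs n ω)) /
        (∑ n ∈ Finset.range N, φ (Xs n ω)))
      atTop
      (fun _ => (∫ ω, {ω' | (1 : ℝ) / 2 ≤ C ω'}.indicator (fun _ => (1 : ℝ)) ω *
          (S ⁻¹' I).indicator (fun _ => (1 : ℝ)) ω ∂P) /
        (P (S ⁻¹' I)).toReal) :=
  consistency_r_hat_uncertain_labels_general P X hX S hS C hCI I hI hIpos φ hφ χ hχ hverφ hverχ Xs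
    hXs hindep hident
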